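/- Let n ≥ 2, let i be an integer with 1 ≤ i ≤ n−1, and let m > i. Let Q_1,…,Q_{i+1} ∈ ℂ^{n+1} be linearly independent vectors, let H ⊆ ℂ^{n+1} be their linear span, and let I_H be the ideal of MvPolynomial (Fin (n+1)) ℂ generated by the linear forms vanishing identically on H. Then every form F of degree m+1 in n+1 variables that vanishes to order ≥ m at each point [Q_j] (1 ≤ j ≤ i+1) lies in the (m−i)-th power of the ideal I_H; that is, the linear span of the Q_j is a fixed component of multiplicity m−i for these forms. -/

import Mathlib

open MvPolynomial

/-- Composition of partial derivatives along a list of variable indices. -/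
noncomputable def derivMap {N : ℕ} (l : List (Fin N)) :
    MvPolynomial (Fin N) ℂ →ₗ[ℂ] MvPolynomial (Fin N) ℂ :=
  l.foldr (fun i f => (pderiv i).toLinearMap.comp f) LinearMap.id

/-- The subspace of polynomials vanishing to order ≥ k at the point `a`,
i.e. all iterated partial derivatives of total order ≤ k-1 vanish at `a`. -/
noncomputable def vanishingSubmodule {N : ℕ} (a : Fin N → ℂ) (k : ℕ) :
    Submodule ℂ (MvPolynomial (Fin N) ℂ) :=
  ⨅ (l : List (Fin N)) (_ : l.length < k),
    LinearMap.ker ((aeval a).toLinearMap.comp (derivMap l))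

/-- The ideal of a linear subspace `H ⊆ ℂ^N`: the ideal generated by the
degree-1 homogeneous polynomials vanishing at every point of `H`. -/
noncomputable def linearFormsIdeal {N : ℕ} (H : Submodule ℂ (Fin N → ℂ)) :
    Ideal (MvPolynomial (Fin N) ℂ) :=
  Ideal.span {L | L ∈ homogeneousSubmodule (Fin N) ℂ 1 ∧ ∀ w ∈ H, eval w L = 0}

/-!
Choose coordinates in which the points `Q j` are coordinate points `e_{σ j}`. A form of degree
`m + 1` vanishing to order `m` at `e_k` has every monomial of degree at most `1` in `x_k`, so
every monomial of the transformed form has degree at least `m + 1 - (i + 1) = m - i` in the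
remaining variables. Those variables are linear forms vanishing on the span of the `Q j`.
-/

open scoped Matrix

section DerivMap

variable {N : ℕ}

theorem derivMap_cons (k : Fin N) (l : List (Fin N)) (F : MvPolynomial (Fin N) ℂ) :
    derivMap (k :: l) F = pderiv k (derivMap l F) := rfl

theorem mem_vanishingSubmodule_iff {a : Fin N → ℂ} {k : ℕ} {F : MvPolynomial (Fin N) ℂ} :
    F ∈ vanishingSubmodule a k ↔
      ∀ l : List (Fin N), l.length < k → aeval a (derivMap l F) = 0 := by
  simp [vanishingSubmodule, Submodule.mem_iInf]

theorem MvPolynomial.IsHomogeneous.derivMap {F : MvPolynomial (Fin N) ℂ} {d : ℕ}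
    (hF : F.IsHomogeneous d) (l : List (Fin N)) :
    (derivMap l F).IsHomogeneous (d - l.length) := by
  induction l with
  | nil => exact hF
  | cons k l ih => simpa [derivMap_cons, Nat.sub_sub] using ih.pderiv (i := k)

theorem coeff_derivMap_eq_zero_iff (l : List (Fin N)) (s : Fin N →₀ ℕ)
    (F : MvPolynomial (Fin N) ℂ) :
    coeff s (derivMap l F) = 0 ↔ coeff (s + Multiset.toFinsupp (l : Multiset (Fin N))) F = 0 := by
  induction l generalizing s with
  | nil => simp [derivMap]
  | cons k l ih =>
    rw [derivMap_cons, coeff_pderiv, mul_eq_zero, ih, ← Multiset.cons_coe,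
      ← Multiset.singleton_add, Multiset.toFinsupp_add, Multiset.toFinsupp_singleton, add_assoc]
    exact or_iff_left (Nat.cast_add_one_ne_zero _)

end DerivMap

namespace MvPolynomial

theorem aeval_single_one_of_isHomogeneous {σ R : Type*} [CommSemiring R] [DecidableEq σ]
    {G : MvPolynomial σ R} {e : ℕ} (hG : G.IsHomogeneous e) (j : σ) :
    aeval (Pi.single j 1) G = coeff (Finsupp.single j e) G := by
  rw [aeval_eq_eval, eval_eq, Finset.sum_eq_single (Finsupp.single j e)]
  · rw [Finset.prod_eq_one, mul_one]
    intro i hi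
    obtain rfl : i = j := by simpa using Finsupp.support_single_subset hi
    simp
  · intro d hd hdj
    obtain ⟨i, hi, hij⟩ : ∃ i ∈ d.support, i ≠ j := by
      by_contra! h
      have hd' : d = Finsupp.single j (d j) :=
        Finsupp.eq_single_iff.2 ⟨fun i hi => Finset.mem_singleton.2 (h i hi), rfl⟩
      have hdeg := hG (mem_support_iff.mp hd)
      rw [hd'] at hdeg
      have hdje : d j = e := by simpa [Finsupp.weight_apply] using hdeg
      exact hdj (hdje ▸ hd')
    rw [Finset.prod_eq_zero hi (by simp [hij, Finsupp.mem_support_iff.mp hi]), mul_zero]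
  · intro h
    simp [notMem_support_iff.mp h]

end MvPolynomial

theorem add_le_of_mem_vanishingSubmodule_single {N : ℕ} {F : MvPolynomial (Fin N) ℂ} {d k : ℕ}
    (hF : F.IsHomogeneous d) {j : Fin N} (hvan : F ∈ vanishingSubmodule (Pi.single j 1) k)
    {α : Fin N →₀ ℕ} (hα : coeff α F ≠ 0) : α j + k ≤ d := by
  -- Differentiating along the exponents of `α` away from `j` and evaluating at `e_j` leaves a
  -- nonzero multiple of `coeff α F`.
  by_contra! hlt
  set μ := α.erase j
  let l := (Finsupp.toMultiset μ).toList
  have hdeg : α j + μ.degree = d := by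
    rw [← hF hα]
    change _ = Finsupp.weight (fun _ => 1) α
    rw [← Finsupp.degree_eq_weight_one, ← Finsupp.degree_single j (α j),
      ← map_add, Finsupp.single_add_erase]
  have hlen : l.length = μ.degree := by
    simp [l, Finsupp.card_toMultiset, Finsupp.degree_apply, Finsupp.sum]
  have hα' :
      Finsupp.single j (d - l.length) + Multiset.toFinsupp (l : Multiset (Fin N)) = α := by
    rw [Multiset.coe_toList, Finsupp.toMultiset_toFinsupp, hlen, ← hdeg, Nat.add_sub_cancel,
      Finsupp.single_add_erase]
  apply hα
  rw [← hα', ← coeff_derivMap_eq_zero_iff,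
    ← aeval_single_one_of_isHomogeneous (hF.derivMap l)]
  exact mem_vanishingSubmodule_iff.1 hvan l (by omega)

namespace MvPolynomial

theorem pderiv_aeval_eq_sum {σ τ R : Type*} [CommSemiring R] [Fintype σ]
    (g : σ → MvPolynomial τ R) (k : τ) (F : MvPolynomial σ R) :
    pderiv k (aeval g F) = ∑ t, pderiv k (g t) * aeval g (pderiv t F) := by
  classical
  induction F using MvPolynomial.induction_on with
  | C a => simp
  | add p q hp hq => simp only [map_add, hp, hq, mul_add, Finset.sum_add_distrib]
  | mul_X p l hp =>
    simp only [map_mul, aeval_X, Derivation.leibniz, pderiv_X, hp, smul_eq_mul, mul_add,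
      map_add, Finset.sum_add_distrib, Finset.mul_sum, Pi.single_apply, mul_ite, mul_one, mul_zero,
      apply_ite (aeval g), map_zero, Finset.sum_ite_eq, Finset.mem_univ, if_true]
    simp only [mul_left_comm (g l)]
    rw [mul_comm]

variable {σ R : Type*} [Fintype σ] [CommSemiring R]

noncomputable def linearSubst (c : Matrix σ σ R) :
    MvPolynomial σ R →ₐ[R] MvPolynomial σ R :=
  aeval fun l => ∑ t, C (c l t) * X t

theorem linearSubst_X (c : Matrix σ σ R) (l : σ) :
    linearSubst c (X l) = ∑ t, C (c l t) * X t :=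
  aeval_X _ _

theorem aeval_linearSubst (c : Matrix σ σ R) (y : σ → R) (F : MvPolynomial σ R) :
    aeval y (linearSubst c F) = aeval (c *ᵥ y) F := by
  rw [linearSubst, ← AlgHom.comp_apply, comp_aeval]
  congr 2
  funext l
  simp [Matrix.mulVec, dotProduct]

theorem linearSubst_comp_linearSubst (c c' : Matrix σ σ R) :
    (linearSubst c').comp (linearSubst c) = linearSubst (c * c') := by
  refine algHom_ext fun l => ?_
  simp only [AlgHom.comp_apply, linearSubst_X, map_sum, map_mul, algHom_C, Finset.mul_sum,
    Matrix.mul_apply, Finset.sum_mul, mul_assoc]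
  exact Finset.sum_comm

theorem linearSubst_one [DecidableEq σ] : linearSubst (1 : Matrix σ σ R) = AlgHom.id R _ :=
  algHom_ext fun l => by simp [linearSubst_X, Matrix.one_apply]

theorem linearSubst_linearSubst_of_mul_eq_one [DecidableEq σ] {c c' : Matrix σ σ R}
    (h : c * c' = 1) (F : MvPolynomial σ R) : linearSubst c' (linearSubst c F) = F := by
  rw [← AlgHom.comp_apply, linearSubst_comp_linearSubst, h, linearSubst_one, AlgHom.id_apply]

theorem IsHomogeneous.linearSubst {F : MvPolynomial σ R} {d : ℕ} (hF : F.IsHomogeneous d)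
    (c : Matrix σ σ R) : (linearSubst c F).IsHomogeneous d := by
  rw [← one_mul d]
  exact hF.aeval _ fun l => IsHomogeneous.sum _ _ _ fun t _ => (isHomogeneous_X R t).C_mul (c l t)

theorem pderiv_linearSubst [DecidableEq σ] (c : Matrix σ σ R) (k : σ) (F : MvPolynomial σ R) :
    pderiv k (linearSubst c F) = ∑ t, C (c t k) * linearSubst c (pderiv t F) := by
  rw [linearSubst, pderiv_aeval_eq_sum]
  congr 1
  funext t
  simp [pderiv_X, Pi.single_apply]

end MvPolynomial

section VanishingOrder

variable {N : ℕ}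

theorem derivMap_linearSubst_mem_span (c : Matrix (Fin N) (Fin N) ℂ) (l : List (Fin N))
    (F : MvPolynomial (Fin N) ℂ) :
    derivMap l (linearSubst c F) ∈ Submodule.span ℂ
      ((fun l' => linearSubst c (derivMap l' F)) '' {l' | l'.length = l.length}) := by
  induction l with
  | nil => exact Submodule.subset_span ⟨[], rfl, rfl⟩
  | cons k l ih =>
    rw [derivMap_cons]
    refine (Submodule.span_le (p := (Submodule.span ℂ _).comap (pderiv k).toLinearMap)).2 ?_ ih
    rintro _ ⟨l', hl', rfl⟩
    rw [SetLike.mem_coe, Submodule.mem_comap, Derivation.coeFn_coe,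
      pderiv_linearSubst]
    refine Submodule.sum_mem _ fun t _ => ?_
    rw [C_mul']
    exact Submodule.smul_mem _ _ (Submodule.subset_span ⟨t :: l', by simpa using hl', rfl⟩)

theorem linearSubst_mem_vanishingSubmodule {c : Matrix (Fin N) (Fin N) ℂ} {a : Fin N → ℂ}
    {k : ℕ} {F : MvPolynomial (Fin N) ℂ} (hF : F ∈ vanishingSubmodule (c *ᵥ a) k) :
    linearSubst c F ∈ vanishingSubmodule a k := by
  refine mem_vanishingSubmodule_iff.2 fun l hl => ?_
  refine Submodule.span_le (p := LinearMap.ker (aeval a).toLinearMap) |>.2 ?_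
    (derivMap_linearSubst_mem_span c l F)
  rintro _ ⟨l', hl', rfl⟩
  rw [SetLike.mem_coe, LinearMap.mem_ker, AlgHom.toLinearMap_apply, aeval_linearSubst]
  exact mem_vanishingSubmodule_iff.1 hF l' (hl' ▸ hl)

end VanishingOrder

namespace MvPolynomial

theorem mem_span_X_pow_of_le_sum {σ R : Type*} [Fintype σ] [CommSemiring R] (S : Finset σ)
    {r : ℕ} {p : MvPolynomial σ R} (h : ∀ s ∈ p.support, r ≤ ∑ k ∈ S, s k) :
    p ∈ Ideal.span (X '' (S : Set σ) : Set (MvPolynomial σ R)) ^ r := by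
  classical
  rw [p.as_sum]
  refine Submodule.sum_mem _ fun s hs => ?_
  have hS :
      ∏ k ∈ S, X k ^ s k ∈ Ideal.span (X '' (S : Set σ) : Set (MvPolynomial σ R)) ^ r := by
    refine Ideal.pow_le_pow_right (h s hs) ?_
    rw [← Finset.prod_pow_eq_pow_sum]
    exact Ideal.prod_mem_prod fun k hk =>
      Ideal.pow_mem_pow (Ideal.subset_span (Set.mem_image_of_mem X hk)) _
  rw [monomial_eq, Finsupp.prod_fintype _ _ fun _ => pow_zero _, ← Finset.prod_mul_prod_compl S]
  exact Ideal.mul_mem_left _ _ (Ideal.mul_mem_right _ _ hS)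

end MvPolynomial

section LinearForms

variable {N : ℕ} {H : Submodule ℂ (Fin N → ℂ)} {c : Matrix (Fin N) (Fin N) ℂ}

theorem linearSubst_X_mem_linearFormsIdeal {k : Fin N} (hk : ∀ w ∈ H, (c *ᵥ w) k = 0) :
    linearSubst c (X k) ∈ linearFormsIdeal H := by
  refine Ideal.subset_span ⟨(isHomogeneous_X ℂ k).linearSubst c, fun w hw => ?_⟩
  change aeval w _ = 0
  rw [aeval_linearSubst, aeval_X]
  exact hk w hw

theorem linearSubst_mem_pow_linearFormsIdeal (S : Finset (Fin N))
    (hS : ∀ k ∈ S, ∀ w ∈ H, (c *ᵥ w) k = 0) {r : ℕ} {p : MvPolynomial (Fin N) ℂ}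
    (hp : p ∈ Ideal.span (X '' (S : Set (Fin N))) ^ r) :
    linearSubst c p ∈ linearFormsIdeal H ^ r := by
  refine Ideal.pow_right_mono ?_ r (Ideal.map_pow (linearSubst c) _ r ▸ Ideal.mem_map_of_mem _ hp)
  rw [Ideal.map_span, Ideal.span_le]
  rintro _ ⟨_, ⟨k, hk, rfl⟩, rfl⟩
  exact linearSubst_X_mem_linearFormsIdeal (hS k hk)

end LinearForms

theorem Matrix.mulVec_apply_eq_zero_of_mem_span {R ι m n : Type*} [CommSemiring R] [Fintype n]
    {c : Matrix m n R} {k : m} {Q : ι → n → R} (hQ : ∀ j, (c *ᵥ Q j) k = 0)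
    {w : n → R} (hw : w ∈ Submodule.span R (Set.range Q)) : (c *ᵥ w) k = 0 := by
  have hker : Submodule.span R (Set.range Q) ≤
      LinearMap.ker ((LinearMap.proj k).comp c.mulVecLin) :=
    Submodule.span_le.2 (Set.range_subset_iff.2 hQ)
  exact hker hw

theorem LinearIndependent.exists_units_mulVec_single {K ι : Type*} [Field K] {N : ℕ}
    {Q : ι → Fin N → K} (hQ : LinearIndependent K Q) :
    ∃ (A : (Matrix (Fin N) (Fin N) K)ˣ) (e : ι ↪ Fin N),
      ∀ j, (A : Matrix (Fin N) (Fin N) K) *ᵥ Pi.single (e j) 1 = Q j := by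
  classical
  have hQr : LinearIndepOn K id (Set.range Q) := hQ.linearIndepOn_id
  let P := Pi.basisFun K (Fin N)
  let b₀ := Module.Basis.extend hQr
  let σ := b₀.indexEquiv P
  let b := b₀.reindex σ
  let e : ι ↪ Fin N := ⟨fun j => σ ⟨Q j, hQr.subset_extend _ ⟨j, rfl⟩⟩,
    fun j j' h => hQ.injective (by simpa using σ.injective h)⟩
  have hb : ∀ j, b (e j) = Q j := fun j => by
    change b₀.reindex σ (σ _) = Q j
    simp [b₀]
  refine ⟨⟨P.toMatrix b, b.toMatrix P, P.toMatrix_mul_toMatrix_flip b,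
    b.toMatrix_mul_toMatrix_flip P⟩, e, fun j => ?_⟩
  ext l
  simp [Module.Basis.toMatrix_apply, P, hb]

theorem degree_le_sum_compl_add_card {σ ι : Type*} [Fintype σ] [DecidableEq σ] [Fintype ι]
    (e : ι ↪ σ) (α : σ →₀ ℕ) (h : ∀ j, α (e j) ≤ 1) :
    α.degree ≤ ∑ k ∈ (Finset.univ.map e)ᶜ, α k + Fintype.card ι := by
  rw [Finsupp.degree_eq_sum, ← Finset.sum_add_sum_compl (Finset.univ.map e), add_comm,
    Finset.sum_map]
  gcongr
  simpa using Finset.sum_le_sum fun j (_ : j ∈ Finset.univ) => h j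

theorem mem_pow_span_X_of_mem_vanishingSubmodule_single {N m : ℕ} {ι : Type*} [Fintype ι]
    {F : MvPolynomial (Fin N) ℂ} (hF : F.IsHomogeneous (m + 1)) (e : ι ↪ Fin N)
    (hvan : ∀ j, F ∈ vanishingSubmodule (Pi.single (e j) 1) m) :
    F ∈ Ideal.span (X '' ((Finset.univ.map e)ᶜ : Finset (Fin N))) ^
      (m + 1 - Fintype.card ι) := by
  refine mem_span_X_pow_of_le_sum _ fun α hα => ?_
  have hdeg : α.degree = m + 1 := by
    rw [Finsupp.degree_eq_weight_one]
    exact hF (mem_support_iff.mp hα)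
  have hle : ∀ j, α (e j) ≤ 1 := fun j => by
    have := add_le_of_mem_vanishingSubmodule_single hF (hvan j) (mem_support_iff.mp hα)
    omega
  have := degree_le_sum_compl_add_card e α hle
  omega

theorem stmt6_general (n i m : ℕ)
    (Q : Fin (i + 1) → (Fin (n + 1) → ℂ)) (hQ : LinearIndependent ℂ Q)
    (F : MvPolynomial (Fin (n + 1)) ℂ) (hF : F.IsHomogeneous (m + 1))
    (hvan : ∀ j, F ∈ vanishingSubmodule (Q j) m) :
    F ∈ (linearFormsIdeal (Submodule.span ℂ (Set.range Q))) ^ (m - i) := by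
  obtain ⟨A, e, hAQ⟩ := hQ.exists_units_mulVec_single
  have hA'Q : ∀ j, (↑A⁻¹ : Matrix _ _ ℂ) *ᵥ Q j = Pi.single (e j) 1 := fun j => by
    rw [← hAQ j, Matrix.mulVec_mulVec, A.inv_mul, Matrix.one_mulVec]
  have hcoord : linearSubst (A : Matrix _ _ ℂ) F ∈
      Ideal.span (X '' ((Finset.univ.map e)ᶜ : Finset (Fin (n + 1)))) ^ (m - i) := by
    simpa using mem_pow_span_X_of_mem_vanishingSubmodule_single (hF.linearSubst _) e fun j =>
      linearSubst_mem_vanishingSubmodule (by rw [hAQ]; exact hvan j)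
  rw [← linearSubst_linearSubst_of_mul_eq_one A.mul_inv F]
  refine linearSubst_mem_pow_linearFormsIdeal _ (fun k hk w hw => ?_) hcoord
  refine Matrix.mulVec_apply_eq_zero_of_mem_span (fun j => ?_) hw
  rw [hA'Q, Pi.single_eq_of_ne]
  rintro rfl
  exact Finset.mem_compl.1 hk (Finset.mem_map_of_mem e (Finset.mem_univ j))

theorem stmt6 (n i m : ℕ) (hn : 2 ≤ n) (hi1 : 1 ≤ i) (hi2 : i ≤ n - 1) (him : i < m)
    (Q : Fin (i + 1) → (Fin (n + 1) → ℂ)) (hQ : LinearIndependent ℂ Q)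
    (F : MvPolynomial (Fin (n + 1)) ℂ) (hF : F.IsHomogeneous (m + 1))
    (hvan : ∀ j, F ∈ vanishingSubmodule (Q j) m) :
    F ∈ (linearFormsIdeal (Submodule.span ℂ (Set.range Q))) ^ (m - i) :=
  stmt6_general n i m Q hQ F hF hvan
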